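/- arXiv:1802.09324 — 2 statements merged into one kernel-verified Lean document; each statement's English description precedes it below -/
import Mathlib

section
/- For all integers r ≥ 1 and m ≥ 1 and every real Δ ≥ 0, the following inequality holds: ∑_{i=1}^{m} (1/(Δ+i)) · (ln(m+Δ+1) − ln(Δ+i))^{r−1} ≥ (1/r) · (ln(m+Δ+1) − ln(Δ+1))^{r}. -/
/-!
Write `u t = log (m + Δ + 1) - log t` and `F i = u (Δ + i) ^ r`, so that `F (m + 1) = 0` and the
left-hand side is `(F 1 - F (m + 1)) / r`, a telescoping sum. Each of its terms is dominated by the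
matching summand on the right: `a ^ r - b ^ r ≤ r a ^ (r - 1) (a - b)` for `0 ≤ b ≤ a`, and
`u (x) - u (x + 1) = log (1 + 1 / x) ≤ 1 / x`.
-/

open Real Finset

theorem pow_sub_pow_le_mul_sub {R : Type*} [CommRing R] [LinearOrder R] [IsOrderedRing R]
    {a b : R} (n : ℕ) (hb : 0 ≤ b) (hba : b ≤ a) :
    a ^ n - b ^ n ≤ n * a ^ (n - 1) * (a - b) := by
  have ha : 0 ≤ a := hb.trans hba
  calc a ^ n - b ^ n ≤ |a ^ n - b ^ n| := le_abs_self _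
    _ ≤ |a - b| * n * max |a| |b| ^ (n - 1) := abs_pow_sub_pow_le a b n
    _ = n * a ^ (n - 1) * (a - b) := by
      rw [abs_of_nonneg (sub_nonneg.2 hba), abs_of_nonneg ha, abs_of_nonneg hb,
        max_eq_left hba]
      ring

theorem Real.log_add_one_sub_log_le_inv {x : ℝ} (hx : 0 < x) : log (x + 1) - log x ≤ x⁻¹ := by
  calc log (x + 1) - log x = log ((x + 1) / x) := (log_div (by positivity) hx.ne').symm
    _ ≤ (x + 1) / x - 1 := log_le_sub_one_of_pos (by positivity)
    _ = x⁻¹ := by field_simp; ring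

theorem Finset.sum_Icc_sub_succ {G : Type*} [AddCommGroup G] (f : ℕ → G) {a b : ℕ}
    (hab : a ≤ b + 1) : ∑ i ∈ Icc a b, (f i - f (i + 1)) = f a - f (b + 1) := by
  rw [← Ico_add_one_right_eq_Icc, ← neg_sub (f (b + 1)), ← sum_Ico_sub f hab, ← sum_neg_distrib]
  simp only [neg_sub]

theorem one_div_mul_log_sub_log_pow_sub_le {x y : ℝ} {n : ℕ} (hn : 0 < n) (hx : 0 < x)
    (hxy : x + 1 ≤ y) :
    1 / (n : ℝ) * ((log y - log x) ^ n - (log y - log (x + 1)) ^ n) ≤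
      1 / x * (log y - log x) ^ (n - 1) := by
  have hb : 0 ≤ log y - log (x + 1) := sub_nonneg.2 (log_le_log (by positivity) hxy)
  have hba : log y - log (x + 1) ≤ log y - log x :=
    sub_le_sub_left (log_le_log hx (by linarith)) _
  rw [one_div_mul_eq_div, div_le_iff₀' (by exact_mod_cast hn)]
  calc _ ≤ n * (log y - log x) ^ (n - 1) * ((log y - log x) - (log y - log (x + 1))) :=
        pow_sub_pow_le_mul_sub n hb hba
    _ = n * (log y - log x) ^ (n - 1) * (log (x + 1) - log x) := by ring
    _ ≤ n * (log y - log x) ^ (n - 1) * x⁻¹ :=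
        mul_le_mul_of_nonneg_left (log_add_one_sub_log_le_inv hx)
          (mul_nonneg n.cast_nonneg (pow_nonneg (hb.trans hba) _))
    _ = n * (1 / x * (log y - log x) ^ (n - 1)) := by ring

theorem sum_log_estimate_uso_general
    (r m : ℕ) (hr : 1 ≤ r) (Δ : ℝ) (hΔ : 0 ≤ Δ) :
    (1 / (r : ℝ)) * (Real.log ((m : ℝ) + Δ + 1) - Real.log (Δ + 1)) ^ r ≤
      ∑ i ∈ Finset.Icc 1 m,
        (1 / (Δ + (i : ℝ))) *
          (Real.log ((m : ℝ) + Δ + 1) - Real.log (Δ + (i : ℝ))) ^ (r - 1) := by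
  set L := log ((m : ℝ) + Δ + 1)
  set F : ℕ → ℝ := fun i => (L - log (Δ + i)) ^ r
  have hF_top : F (m + 1) = 0 := by
    have hlast : Δ + ((m + 1 : ℕ) : ℝ) = m + Δ + 1 := by push_cast; ring
    simp only [F, L, hlast, sub_self]
    exact zero_pow (by omega)
  have hterm : ∀ i ∈ Icc 1 m, 1 / (r : ℝ) * (F i - F (i + 1)) ≤
      1 / (Δ + i) * (L - log (Δ + i)) ^ (r - 1) := by
    intro i hi
    have hi1 : (1 : ℝ) ≤ i := by exact_mod_cast (mem_Icc.1 hi).1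
    have him : (i : ℝ) ≤ m := by exact_mod_cast (mem_Icc.1 hi).2
    simpa only [F, L, Nat.cast_add_one, add_assoc] using
      one_div_mul_log_sub_log_pow_sub_le (x := Δ + i) (y := m + Δ + 1) hr (by linarith) (by linarith)
  calc 1 / (r : ℝ) * (L - log (Δ + 1)) ^ r = 1 / (r : ℝ) * (F 1 - F (m + 1)) := by
        simp [F, hF_top]
    _ = ∑ i ∈ Icc 1 m, 1 / (r : ℝ) * (F i - F (i + 1)) := by
        rw [← mul_sum, sum_Icc_sub_succ F (by omega)]
    _ ≤ _ := sum_le_sum hterm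

/-- the sum-versus-integral estimate used in the grid-USO lower bound:
`∑_{i=1}^{m} (1/(Δ+i)) (ln(m+Δ+1) − ln(Δ+i))^{r−1} ≥ (1/r) (ln(m+Δ+1) − ln(Δ+1))^r`. -/
theorem sum_log_estimate_uso
    (r m : ℕ) (hr : 1 ≤ r) (hm : 1 ≤ m) (Δ : ℝ) (hΔ : 0 ≤ Δ) :
    (1 / (r : ℝ)) * (Real.log ((m : ℝ) + Δ + 1) - Real.log (Δ + 1)) ^ r ≤
      ∑ i ∈ Finset.Icc 1 m,
        (1 / (Δ + (i : ℝ))) *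
          (Real.log ((m : ℝ) + Δ + 1) - Real.log (Δ + (i : ℝ))) ^ (r - 1) :=
  sum_log_estimate_uso_general r m hr Δ hΔ
end

section
/- For all integers r ≥ 1 and m ≥ 1 and every real Δ ≥ 0, setting C = r(r−1)/2, M = m + C + Δ, and f(k) = 1 + C + Δ + r·k − r, the following inequality holds: ∑_{k=1}^{m−1} (1/f(k)) · (ln(M + r·k − r) − ln f(k))^{r−1} ≥ (1/r²) · (ln M − ln(1 + C + Δ))^{r}. -/
/-!
With `p k = (ln M - ln f(k))⁺`, one has `p 1 = ln M - ln(1 + C + Δ)` and, as `f(m) ≥ M`, `p m = 0`; so `p 1 ^ r`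
telescopes into the increments `p k ^ r - p (k + 1) ^ r`. By the mean value bound for `x ↦ x ^ r`
each increment is at most `r · p k ^ (r - 1) · (p k - p (k + 1))`, and
`p k - p (k + 1) ≤ ln f(k + 1) - ln f(k) ≤ r / f(k)`, while `p k ≤ ln(M + rk - r) - ln f(k)`.
-/

open Real Finset

lemma posPart_log_sub_sub_posPart_log_sub_le (M : ℝ) {u v : ℝ} (hu : 0 < u) (huv : u ≤ v) :
    (log M - log u)⁺ - (log M - log v)⁺ ≤ (v - u) / u := by
  have hlip : (log M - log u)⁺ - (log M - log v)⁺ ≤ (log v - log u)⁺ := by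
    simp only [posPart_def]
    exact max_sub_max_le_max _ 0 _ 0 |>.trans_eq (by rw [sub_sub_sub_cancel_left, sub_zero])
  have hlog : log v - log u ≤ (v - u) / u := by
    rw [← log_div (hu.trans_le huv).ne' hu.ne', sub_div, div_self hu.ne']
    exact log_le_sub_one_of_pos (div_pos (hu.trans_le huv) hu)
  refine hlip.trans (sup_le hlog ?_)
  exact div_nonneg (sub_nonneg.2 huv) hu.le

lemma pow_posPart_log_sub_sub_pow_posPart_log_sub_le (n : ℕ) {M N u v : ℝ} (hM : 0 < M)
    (hMN : M ≤ N) (hu : 0 < u) (huv : u ≤ v) (huN : u ≤ N) :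
    (log M - log u)⁺ ^ n - (log M - log v)⁺ ^ n ≤
      n * (log N - log u) ^ (n - 1) * ((v - u) / u) := by
  set x := (log M - log u)⁺
  set y := (log M - log v)⁺
  have hy : 0 ≤ y := posPart_nonneg _
  have hyx : y ≤ x := posPart_mono (by gcongr)
  have hN : 0 ≤ log N - log u := sub_nonneg.2 (log_le_log hu huN)
  have hxN : x ≤ log N - log u := sup_le (by gcongr) hN
  calc x ^ n - y ^ n ≤ |x - y| * n * max |x| |y| ^ (n - 1) := le_abs_self _ |>.trans
        (abs_pow_sub_pow_le ..)
    _ = n * x ^ (n - 1) * (x - y) := by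
        rw [abs_of_nonneg (sub_nonneg.2 hyx), abs_of_nonneg hy, abs_of_nonneg (hy.trans hyx),
          max_eq_left hyx]
        ring
    _ ≤ n * (log N - log u) ^ (n - 1) * ((v - u) / u) := by
        gcongr
        exact posPart_log_sub_sub_posPart_log_sub_le M hu huv

/-- A discrete form of `∫_{f j}^M (ln M - ln t) ^ (n - 1) dt / t = (ln M - ln f j) ^ n / n`. -/
theorem pow_posPart_log_sub_le_sum {n j m : ℕ} {M : ℝ} {f N : ℕ → ℝ} (hn : n ≠ 0)
    (hjm : j ≤ m) (hM : 0 < M) (hMf : M ≤ f m)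
    (hf : ∀ k ∈ Ico j m, 0 < f k ∧ f k ≤ f (k + 1)) (hN : ∀ k ∈ Ico j m, M ≤ N k ∧ f k ≤ N k) :
    (log M - log (f j))⁺ ^ n ≤
      n * ∑ k ∈ Ico j m, (log (N k) - log (f k)) ^ (n - 1) * ((f (k + 1) - f k) / f k) := by
  set p : ℕ → ℝ := fun k ↦ (log M - log (f k))⁺
  have hpm : p m = 0 :=
    posPart_eq_zero.2 (sub_nonpos.2 (log_le_log hM hMf))
  have htelescope : ∑ k ∈ Ico j m, (p k ^ n - p (k + 1) ^ n) = p j ^ n := by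
    calc ∑ k ∈ Ico j m, (p k ^ n - p (k + 1) ^ n) = -∑ k ∈ Ico j m, (p (k + 1) ^ n - p k ^ n) := by
          simp only [← sum_neg_distrib, neg_sub]
      _ = p j ^ n := by rw [sum_Ico_sub (fun k ↦ p k ^ n) hjm, hpm, zero_pow hn, zero_sub, neg_neg]
  rw [← htelescope, mul_sum]
  refine sum_le_sum fun k hk ↦ ?_
  rw [← mul_assoc]
  exact pow_posPart_log_sub_sub_pow_posPart_log_sub_le n hM (hN k hk).1 (hf k hk).1
    (hf k hk).2 (hN k hk).2

/-- the sum-versus-integral estimate used in the inductive lower bound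
for the augmented pivoting process: with `C = r(r−1)/2`, `M = m + C + Δ` and
`f(k) = 1 + C + Δ + rk − r`, one has
`∑_{k=1}^{m−1} (1/f(k)) (ln(M + rk − r) − ln f(k))^{r−1} ≥ (1/r²)(ln M − ln(1+C+Δ))^r`. -/
theorem sum_log_estimate_augmented
    (r m : ℕ) (hr : 1 ≤ r) (hm : 1 ≤ m) (Δ : ℝ) (hΔ : 0 ≤ Δ)
    (C M : ℝ) (f : ℕ → ℝ)
    (hC : C = (r : ℝ) * ((r : ℝ) - 1) / 2)
    (hM : M = (m : ℝ) + C + Δ)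
    (hf : ∀ k : ℕ, f k = 1 + C + Δ + (r : ℝ) * (k : ℝ) - (r : ℝ)) :
    (1 / (r : ℝ) ^ 2) * (Real.log M - Real.log (1 + C + Δ)) ^ r ≤
      ∑ k ∈ Finset.Icc 1 (m - 1),
        (1 / f k) *
          (Real.log (M + (r : ℝ) * (k : ℝ) - (r : ℝ)) - Real.log (f k)) ^ (r - 1) := by
  have hr1 : (1 : ℝ) ≤ r := by exact_mod_cast hr
  have hm1 : (1 : ℝ) ≤ m := by exact_mod_cast hm
  have hC0 : 0 ≤ C := hC ▸ by nlinarith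
  have hf1 : f 1 = 1 + C + Δ := by rw [hf]; push_cast; ring
  have hstep : ∀ k : ℕ, f (k + 1) - f k = r := fun k ↦ by rw [hf, hf]; push_cast; ring
  have hk1 : ∀ k ∈ Ico 1 m, (1 : ℝ) ≤ k := fun k hk ↦ by exact_mod_cast (mem_Ico.1 hk).1
  have hestimate := pow_posPart_log_sub_le_sum (n := r) (j := 1) (M := M) (f := f)
    (N := fun k ↦ M + r * k - r) (by omega) hm (by linarith) (by rw [hM, hf]; nlinarith)
    (fun k hk ↦ ⟨by rw [hf]; nlinarith [hk1 k hk], by linarith [hstep k]⟩)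
    (fun k hk ↦ ⟨by nlinarith [hk1 k hk], by rw [hf, hM]; nlinarith [hk1 k hk]⟩)
  simp only [hstep] at hestimate
  rw [← hf1, ← posPart_eq_self.2 (sub_nonneg.2 (log_le_log (by linarith) (by linarith))),
    Icc_sub_one_right_eq_Ico_of_not_isMin (by simpa using Nat.one_le_iff_ne_zero.1 hm)]
  calc _ ≤ 1 / (r : ℝ) ^ 2 * (r * ∑ k ∈ Ico 1 m,
        (log (M + r * k - r) - log (f k)) ^ (r - 1) * (r / f k)) := by gcongr
    _ = _ := by
      rw [mul_sum, mul_sum]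
      exact sum_congr rfl fun k _ ↦ by field_simp
end
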